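/- Let m ≥ 4 be even and 𝔷 ∈ ℍ. If z = x+iy ∈ ℍ satisfies y > Im(M𝔷) for all M ∈ SL₂(ℤ), then H_m(𝔷,z) = 2πi Σ_{n≥0} Σ_{c,d∈ℤ, gcd(c,d)=1} (c𝔷+d)^{−m} e^{2πn𝔷₂/|c𝔷+d|²} e(−n(ac|𝔷|² + bd + 𝔷₁(ad+bc))/|c𝔷+d|²) q^n, where for each coprime pair (c,d), a,b ∈ ℤ are any integers with ad−bc = 1 (the summand is independent of this choice). -/

import Mathlib

open Complex Real Filter Topology

namespace RamanujanMero

noncomputable section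

/-- `ρ = e^{πi/3}`. -/
def rho : ℂ := Complex.exp ((π : ℂ) * Complex.I / 3)

/-- `e(t) = e^{2πit}` for real `t`. -/
def eR (t : ℝ) : ℂ := Complex.exp (2 * (π : ℂ) * Complex.I * (t : ℂ))

/-- `q = e^{2πiz}`. -/
def qexp (z : ℂ) : ℂ := Complex.exp (2 * (π : ℂ) * Complex.I * z)

-- A chosen completion `(a,b)` of `(c,d)` to a unimodular pair: `a*d - b*c = 1`.
open scoped Classical in
def completion (c d : ℤ) : ℤ × ℤ :=
  if h : ∃ p : ℤ × ℤ, p.1 * d - p.2 * c = 1 then h.choose else (0, 0)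

/-- The Möbius image `M𝔷 = (a𝔷+b)/(c𝔷+d)` for the coset of `Γ∞\SL₂(ℤ)` with
bottom row `(c,d)`, using the chosen completion. -/
def moeb (c d : ℤ) (𝔷 : ℂ) : ℂ :=
  (((completion c d).1 : ℂ) * 𝔷 + ((completion c d).2 : ℂ)) / ((c : ℂ) * 𝔷 + (d : ℂ))

/-- Coprime pairs of integers, parametrizing `Γ∞\SL₂(ℤ)` by bottom rows. -/
def CoprimePair : Type := {p : ℤ × ℤ // IsCoprime p.1 p.2}

/-- The Poincaré series `H_{m,ℓ}(𝔷,z)`. -/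
def Hml (m ℓ : ℕ) (𝔷 z : ℂ) : ℂ :=
  2 * (π : ℂ) * Complex.I *
    ∑' p : CoprimePair,
      ((((moeb p.1.1 p.1.2 𝔷).im ^ ℓ)⁻¹ : ℝ) : ℂ) *
        (((p.1.1 : ℂ) * 𝔷 + (p.1.2 : ℂ)) ^ m)⁻¹ *
        (1 - Complex.exp (2 * (π : ℂ) * Complex.I * (z - moeb p.1.1 p.1.2 𝔷)))⁻¹

/-- `H^{(r)}_{m,ℓ}(𝔷,z) = ∂^r/∂z^r H_{m,ℓ}(𝔷,z)`. -/
def Hder (m ℓ r : ℕ) (𝔷 z : ℂ) : ℂ := iteratedDeriv r (Hml m ℓ 𝔷) z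

/-- The differential operator `∂/∂X_𝔷(α) = ((α-𝔷̄)²/(2i𝔷₂)) ∂/∂α`. -/
def Xderiv (𝔷 : ℂ) (f : ℂ → ℂ) : ℂ → ℂ :=
  fun α => ((α - (starRingEnd ℂ) 𝔷) ^ 2 / (2 * Complex.I * (𝔷.im : ℂ))) * deriv f α

/-- `Y_{2−m,ν}(𝔷,z)` for `ν ∈ -ℕ`. -/
def Yser (m : ℕ) (ν : ℤ) (𝔷 z : ℂ) : ℂ :=
  ((((-ν - 1).toNat.factorial : ℕ) : ℂ))⁻¹ *
    ((Xderiv 𝔷)^[(-ν - 1).toNat]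
      (fun α => (α - (starRingEnd ℂ) 𝔷) ^ m * Hml m 0 α z)) 𝔷

/-- `B_{m,c,d}(𝔷,n)`. -/
def Bcd (m : ℕ) (c d : ℤ) (𝔷 : ℂ) (n : ℕ) : ℂ :=
  (((c : ℂ) * 𝔷 + (d : ℂ)) ^ m)⁻¹ *
    ((Real.exp (2 * π * n * 𝔷.im / Complex.normSq ((c : ℂ) * 𝔷 + (d : ℂ))) : ℝ) : ℂ) *
    eR (-(n * ((((completion c d).1 * c : ℤ) : ℝ) * Complex.normSq 𝔷 +
        (((completion c d).2 * d : ℤ) : ℝ) +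
        𝔷.re * (((completion c d).1 * d + (completion c d).2 * c : ℤ) : ℝ)) /
          Complex.normSq ((c : ℂ) * 𝔷 + (d : ℂ))))

/-- The ring of integers `ℤ[𝔷]` of `ℚ(𝔷)`, as a subring of `ℂ` (for `𝔷 ∈ {i, ρ}`). -/
def ringOf (𝔷 : ℂ) : Subring ℂ := Subring.closure {𝔷}

/-- `𝔷` as an element of `ℤ[𝔷]`. -/
def zel (𝔷 : ℂ) : ringOf 𝔷 := ⟨𝔷, Subring.subset_closure (Set.mem_singleton 𝔷)⟩

/-- The norm of an ideal. -/
def inorm (𝔷 : ℂ) (b : Ideal (ringOf 𝔷)) : ℕ := Nat.card (↥(ringOf 𝔷) ⧸ b)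

/-- An ideal is primitive if it is not divisible by (i.e. contained in) any ideal `(g)`
with `g ∈ ℤ`, `g ≥ 2`. -/
def IsPrimitiveIdeal {R : Type*} [CommRing R] (b : Ideal R) : Prop :=
  ∀ g : ℤ, 2 ≤ g → ¬ b ≤ Ideal.span {(g : R)}

/-- Nonzero primitive ideals of `ℤ[𝔷]`. -/
def PrimIdeal (𝔷 : ℂ) : Type := {b : Ideal (ringOf 𝔷) // b ≠ ⊥ ∧ IsPrimitiveIdeal b}

-- A chosen coprime pair `(c,d)` with `b = (c𝔷 + d)`.
open scoped Classical in
def genPair (𝔷 : ℂ) (b : Ideal (ringOf 𝔷)) : ℤ × ℤ :=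
  if h : ∃ p : ℤ × ℤ, IsCoprime p.1 p.2 ∧
      b = Ideal.span {(p.1 : ringOf 𝔷) * zel 𝔷 + (p.2 : ringOf 𝔷)} then h.choose else (1, 0)

/-- `ω_𝔷`, the order of the stabilizer of `𝔷` in `PSL₂(ℤ)` (for `𝔷 ∈ {i, ρ}`). -/
def omegaZ (𝔷 : ℂ) : ℕ := if 𝔷 = Complex.I then 2 else 3

/-- `C_k(b,n)`, for a primitive ideal `b` of `ℤ[i]` (if `𝔷 = i`) resp. `ℤ[ρ]`. -/
def Cfun (𝔷 : ℂ) (k : ℕ) (b : Ideal (ringOf 𝔷)) (n : ℕ) : ℝ :=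
  let c : ℤ := (genPair 𝔷 b).1
  let d : ℤ := (genPair 𝔷 b).2
  let a : ℤ := (completion c d).1
  let b' : ℤ := (completion c d).2
  if 𝔷 = Complex.I then
    Real.cos (2 * π * n * ((a * c + b' * d : ℤ) : ℝ) / (inorm 𝔷 b) +
      k * Real.arctan ((c : ℝ) / (d : ℝ)))
  else
    (-1 : ℝ) ^ n *
      Real.cos (π * n * ((a * d + b' * c - 2 * a * c - 2 * b' * d : ℤ) : ℝ) / (inorm 𝔷 b) +
        π * n - k * Real.arctan ((c : ℝ) * Real.sqrt 3 / (2 * (d : ℝ) - (c : ℝ))))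

/-- The series `F_{k,ℓ,r}(𝔷;q)`. -/
def Fser (k ℓ r : ℕ) (𝔷 z : ℂ) : ℂ :=
  ∑' n : ℕ,
    (∑' b : PrimIdeal 𝔷,
      ((Cfun 𝔷 k b.1 n * (inorm 𝔷 b.1 : ℝ) ^ ((ℓ : ℝ) - (k : ℝ) / 2) * (n : ℝ) ^ r *
        Real.exp (2 * π * n * 𝔷.im / (inorm 𝔷 b.1)) : ℝ) : ℂ)) * qexp z ^ n

/-- The quasimodular Eisenstein series `E₂`. -/
def E2 (z : ℂ) : ℂ :=
  1 - 24 * ∑' n : ℕ, ((ArithmeticFunction.sigma 1 (n + 1) : ℕ) : ℂ) * qexp z ^ (n + 1)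

/-- The Eisenstein series `E₄`. -/
def E4 (z : ℂ) : ℂ :=
  1 + 240 * ∑' n : ℕ, ((ArithmeticFunction.sigma 3 (n + 1) : ℕ) : ℂ) * qexp z ^ (n + 1)

/-- The Eisenstein series `E₆`. -/
def E6 (z : ℂ) : ℂ :=
  1 - 504 * ∑' n : ℕ, ((ArithmeticFunction.sigma 5 (n + 1) : ℕ) : ℂ) * qexp z ^ (n + 1)

/-- The modular completion `Ê₂` of `E₂`. -/
def E2hat (z : ℂ) : ℂ := E2 z - 3 / ((π : ℂ) * (z.im : ℂ))

/-- The discriminant function `Δ`. -/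
def Δfun (z : ℂ) : ℂ := (E4 z ^ 3 - E6 z ^ 2) / 1728

/-- The `j`-invariant. -/
def jfun (z : ℂ) : ℂ := E4 z ^ 3 / Δfun z

/-- `SL₂(ℤ)`. -/
abbrev SL2Z := Matrix.SpecialLinearGroup (Fin 2) ℤ

/-- The Möbius action of `SL₂(ℤ)` on `ℂ` (partial; used on the upper half-plane). -/
def act (M : SL2Z) (z : ℂ) : ℂ :=
  (((M.1 0 0 : ℤ) : ℂ) * z + ((M.1 0 1 : ℤ) : ℂ)) /
    (((M.1 1 0 : ℤ) : ℂ) * z + ((M.1 1 1 : ℤ) : ℂ))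

/-- A meromorphic modular form of weight `κ` for `SL₂(ℤ)`, holomorphic at `i∞`,
whose only poles modulo `SL₂(ℤ)` are at `z = 𝔷` and have order at most `ν`. -/
structure IsMeroModularPoles (κ : ℤ) (𝔷 : ℂ) (ν : ℕ) (F : ℂ → ℂ) : Prop where
  transform : ∀ M : SL2Z, ∀ z : ℂ, 0 < z.im →
    F (act M z) = (((M.1 1 0 : ℤ) : ℂ) * z + ((M.1 1 1 : ℤ) : ℂ)) ^ κ * F z
  holo : ∀ z : ℂ, 0 < z.im → (∀ M : SL2Z, z ≠ act M 𝔷) → AnalyticAt ℂ F z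
  pole : ∀ z : ℂ, 0 < z.im → (∃ M : SL2Z, z = act M 𝔷) →
    ∃ g : ℂ → ℂ, AnalyticAt ℂ g z ∧ ∀ᶠ w in nhdsWithin z {z}ᶜ, F w = g w / (w - z) ^ ν
  bounded_at_inf : ∃ C Y : ℝ, ∀ z : ℂ, Y < z.im → ‖F z‖ ≤ C

/-- A meromorphic cusp form of weight `m` for `SL₂(ℤ)` whose only poles modulo
`SL₂(ℤ)` are at the point `z₀` and have order at most `ν`. -/
structure IsMeroCuspFormPoles (m : ℕ) (z₀ : ℂ) (ν : ℕ) (G : ℂ → ℂ) : Prop where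
  transform : ∀ M : SL2Z, ∀ z : ℂ, 0 < z.im →
    G (act M z) = (((M.1 1 0 : ℤ) : ℂ) * z + ((M.1 1 1 : ℤ) : ℂ)) ^ m * G z
  holo : ∀ z : ℂ, 0 < z.im → (∀ M : SL2Z, z ≠ act M z₀) → AnalyticAt ℂ G z
  pole : ∀ z : ℂ, 0 < z.im → (∃ M : SL2Z, z = act M z₀) →
    ∃ g : ℂ → ℂ, AnalyticAt ℂ g z ∧ ∀ᶠ w in nhdsWithin z {z}ᶜ, G w = g w / (w - z) ^ ν
  zero_at_inf : Tendsto G (comap Complex.im atTop) (nhds 0)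

/-- A holomorphic cusp form of weight `m` for `SL₂(ℤ)`. -/
structure IsCuspForm (m : ℕ) (f : ℂ → ℂ) : Prop where
  holo : ∀ z : ℂ, 0 < z.im → AnalyticAt ℂ f z
  transform : ∀ M : SL2Z, ∀ z : ℂ, 0 < z.im →
    f (act M z) = (((M.1 1 0 : ℤ) : ℂ) * z + ((M.1 1 1 : ℤ) : ℂ)) ^ m * f z
  zero_at_inf : Tendsto f (comap Complex.im atTop) (nhds 0)

/-- `𝓕^{(r)}_{m,ℓ}(𝔷,z)`. -/
def Fcal (m ℓ r : ℕ) (𝔷 z : ℂ) : ℂ :=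
  ∑ j ∈ Finset.range (ℓ + 1),
    ((ℓ.choose j : ℕ) : ℂ) * (3 / (π : ℂ)) ^ (ℓ - j) * E2hat 𝔷 ^ j * Hder (m - 2 * j) (ℓ - j) r 𝔷 z

/-
For a coprime pair `(c,d)` put `w = e(z - M𝔷)`. Since `Im(M𝔷)` attains its maximum over `SL₂(ℤ)`
and that maximum is `< Im z`, all these `w` lie in one disc `|w| ≤ r < 1`. Expanding `(1 - w)⁻¹`
geometrically, the double series is dominated by `∑ |c𝔷+d|^{-m} · ∑ rⁿ < ∞`, so the two
summations can be swapped. Finally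
`M𝔷 = (ac|𝔷|² + bd + 𝔷₁(ad+bc))/|c𝔷+d|² + i 𝔷₂/|c𝔷+d|²` turns `wⁿ` into the stated summand.
-/

theorem tsum_mul_inv_one_sub_eq_tsum_tsum_mul_pow {ι 𝕜 : Type*} [NormedField 𝕜]
    [CompleteSpace 𝕜] {g w : ι → 𝕜} {r : ℝ} (hg : Summable fun i => ‖g i‖) (hr : r < 1)
    (hw : ∀ i, ‖w i‖ ≤ r) :
    ∑' i, g i * (1 - w i)⁻¹ = ∑' n : ℕ, ∑' i, g i * w i ^ n := by
  -- `r` can be negative when `ι` is empty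
  set s := max r 0
  have hs : s < 1 := max_lt hr one_pos
  have hws : ∀ i, ‖w i‖ ≤ s := fun i => (hw i).trans (le_max_left _ _)
  have hsum : Summable (Function.uncurry fun i (n : ℕ) => g i * w i ^ n) := by
    refine Summable.of_norm_bounded
      (hg.mul_of_nonneg (summable_geometric_of_lt_one (le_max_right _ _) hs)
        (fun _ => norm_nonneg _) (fun _ => pow_nonneg (le_max_right _ _) _)) fun q => ?_
    rw [Function.uncurry_apply_pair, norm_mul, norm_pow]
    gcongr
    exact hws q.1
  calc ∑' i, g i * (1 - w i)⁻¹ = ∑' i, ∑' n : ℕ, g i * w i ^ n := by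
        refine tsum_congr fun i => ?_
        rw [tsum_mul_left, tsum_geometric_of_norm_lt_one ((hws i).trans_lt hs)]
    _ = ∑' n : ℕ, ∑' i, g i * w i ^ n := hsum.tsum_comm.symm

theorem completion_spec {c d : ℤ} (h : IsCoprime c d) :
    (completion c d).1 * d - (completion c d).2 * c = 1 := by
  obtain ⟨u, v, huv⟩ := h
  have hex : ∃ p : ℤ × ℤ, p.1 * d - p.2 * c = 1 := ⟨(v, -u), by dsimp only; linarith⟩
  rw [completion, dif_pos hex]
  exact hex.choose_spec

namespace CoprimePair

def bottomRow (p : CoprimePair) : Fin 2 → ℤ := ![p.1.1, p.1.2]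

theorem bottomRow_injective : Function.Injective bottomRow := fun _ _ h =>
  Subtype.ext (Prod.ext (congrFun h 0) (congrFun h 1))

def toSL (p : CoprimePair) : SL2Z :=
  ⟨!![(completion p.1.1 p.1.2).1, (completion p.1.1 p.1.2).2; p.1.1, p.1.2], by
    rw [Matrix.det_fin_two_of]
    linarith [completion_spec p.2]⟩

theorem act_toSL (p : CoprimePair) (𝔷 : ℂ) : act p.toSL 𝔷 = moeb p.1.1 p.1.2 𝔷 := by
  simp [act, moeb, toSL]

end CoprimePair

theorem act_eq_coe_smul (M : SL2Z) (τ : UpperHalfPlane) : act M τ = ↑(M • τ) := by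
  rw [act, UpperHalfPlane.coe_specialLinearGroup_apply]
  simp

theorem exists_forall_im_moeb_le (τ : UpperHalfPlane) :
    ∃ M : SL2Z, ∀ p : CoprimePair, (moeb p.1.1 p.1.2 τ).im ≤ (act M τ).im := by
  obtain ⟨M, hM⟩ := ModularGroup.exists_max_im τ
  refine ⟨M, fun p => ?_⟩
  rw [← p.act_toSL, act_eq_coe_smul, act_eq_coe_smul]
  exact hM p.toSL

theorem summable_norm_inv_pow (τ : UpperHalfPlane) {m : ℕ} (hm : 3 ≤ m) :
    Summable fun p : CoprimePair => ‖(((p.1.1 : ℂ) * τ + (p.1.2 : ℂ)) ^ m)⁻¹‖ := by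
  have h := (EisensteinSeries.summable_norm_eisSummand (k := m) (by omega) τ).comp_injective
    CoprimePair.bottomRow_injective
  refine h.congr fun p => ?_
  simp [EisensteinSeries.eisSummand, CoprimePair.bottomRow, zpow_neg]

theorem div_eq_ofReal_add_ofReal_mul_I {a b c d : ℤ} (h : a * d - b * c = 1) (𝔷 : ℂ) :
    ((a : ℂ) * 𝔷 + b) / ((c : ℂ) * 𝔷 + d) =
      (((((a * c : ℤ) : ℝ) * normSq 𝔷 + ((b * d : ℤ) : ℝ) +
          𝔷.re * ((a * d + b * c : ℤ) : ℝ)) / normSq ((c : ℂ) * 𝔷 + d) : ℝ) : ℂ) +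
        ((𝔷.im / normSq ((c : ℂ) * 𝔷 + d) : ℝ) : ℂ) * I := by
  have hdet : (a : ℝ) * d - b * c = 1 := by exact_mod_cast h
  have hnum : ((a : ℂ) * 𝔷 + b) * (starRingEnd ℂ) ((c : ℂ) * 𝔷 + d) =
      ((((a * c : ℤ) : ℝ) * normSq 𝔷 + ((b * d : ℤ) : ℝ) +
          𝔷.re * ((a * d + b * c : ℤ) : ℝ) : ℝ) : ℂ) + (𝔷.im : ℂ) * I := by
    apply Complex.ext <;>
      simp only [normSq_apply, mul_re, mul_im, add_re, add_im, ofReal_re, ofReal_im, intCast_re,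
        intCast_im, I_re, I_im, conj_re, conj_im, Int.cast_mul, Int.cast_add]
    · ring
    · linear_combination 𝔷.im * hdet
  by_cases hc : (c : ℂ) * 𝔷 + d = 0
  · simp [hc]
  rw [← mul_div_mul_right _ _ (c := (starRingEnd ℂ) ((c : ℂ) * 𝔷 + d))
    ((map_ne_zero (starRingEnd ℂ)).2 hc), mul_conj, hnum]
  push_cast
  field_simp

theorem exp_two_pi_I_sub_moeb_pow {c d : ℤ} (h : IsCoprime c d) (𝔷 z : ℂ) (n : ℕ) :
    Complex.exp (2 * (π : ℂ) * I * (z - moeb c d 𝔷)) ^ n =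
      ((Real.exp (2 * π * n * 𝔷.im / normSq ((c : ℂ) * 𝔷 + d)) : ℝ) : ℂ) *
        eR (-(n * ((((completion c d).1 * c : ℤ) : ℝ) * normSq 𝔷 +
            (((completion c d).2 * d : ℤ) : ℝ) +
            𝔷.re * (((completion c d).1 * d + (completion c d).2 * c : ℤ) : ℝ)) /
          normSq ((c : ℂ) * 𝔷 + d))) * qexp z ^ n := by
  rw [moeb, div_eq_ofReal_add_ofReal_mul_I (completion_spec h), eR, qexp, ofReal_exp,
    ← Complex.exp_nat_mul, ← Complex.exp_nat_mul, ← Complex.exp_add, ← Complex.exp_add]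
  congr 1
  push_cast
  linear_combination (-(2 * π * n * 𝔷.im / normSq ((c : ℂ) * 𝔷 + d) : ℂ)) * I_sq

theorem H_Fourier_coprime_general (m : ℕ) (hm : 4 ≤ m)
    (𝔷 : ℂ) (h𝔷 : 0 < 𝔷.im) (z : ℂ)
    (hy : ∀ M : SL2Z, (act M 𝔷).im < z.im) :
    Hml m 0 𝔷 z = 2 * (π : ℂ) * Complex.I *
      ∑' n : ℕ, (∑' p : CoprimePair,
        (((p.1.1 : ℂ) * 𝔷 + (p.1.2 : ℂ)) ^ m)⁻¹ *
          ((Real.exp (2 * π * n * 𝔷.im / Complex.normSq ((p.1.1 : ℂ) * 𝔷 + (p.1.2 : ℂ))) : ℝ) : ℂ) *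
          eR (-(n * ((((completion p.1.1 p.1.2).1 * p.1.1 : ℤ) : ℝ) * Complex.normSq 𝔷 +
              (((completion p.1.1 p.1.2).2 * p.1.2 : ℤ) : ℝ) +
              𝔷.re * (((completion p.1.1 p.1.2).1 * p.1.2 +
                (completion p.1.1 p.1.2).2 * p.1.1 : ℤ) : ℝ)) /
            Complex.normSq ((p.1.1 : ℂ) * 𝔷 + (p.1.2 : ℂ))))) * qexp z ^ n := by
  let τ : UpperHalfPlane := ⟨𝔷, h𝔷⟩
  obtain ⟨M, hM⟩ := exists_forall_im_moeb_le τ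
  have hr : Real.exp (-(2 * π * (z.im - (act M 𝔷).im))) < 1 :=
    Real.exp_lt_one_iff.2 (neg_lt_zero.2 (by have := sub_pos.2 (hy M); positivity))
  have hw : ∀ p : CoprimePair, ‖Complex.exp (2 * π * I * (z - moeb p.1.1 p.1.2 𝔷))‖ ≤
      Real.exp (-(2 * π * (z.im - (act M 𝔷).im))) := by
    intro p
    have hre : (2 * π * I * (z - moeb p.1.1 p.1.2 𝔷)).re =
        -(2 * π * (z.im - (moeb p.1.1 p.1.2 𝔷).im)) := by
      simp
    rw [Complex.norm_exp, hre]
    gcongr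
    exact hM p
  rw [Hml]
  congr 1
  simp only [pow_zero, inv_one, ofReal_one, one_mul]
  rw [tsum_mul_inv_one_sub_eq_tsum_tsum_mul_pow (summable_norm_inv_pow τ (by omega)) hr hw]
  refine tsum_congr fun n => ?_
  rw [← tsum_mul_right]
  refine tsum_congr fun p => ?_
  rw [exp_two_pi_I_sub_moeb_pow p.2]
  ring

/-- Fourier expansion of `H_m(𝔷,z)` as a sum over coprime pairs. -/
theorem H_Fourier_coprime (m : ℕ) (hm : 4 ≤ m) (hme : Even m)
    (𝔷 : ℂ) (h𝔷 : 0 < 𝔷.im) (z : ℂ) (hz : 0 < z.im)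
    (hy : ∀ M : SL2Z, (act M 𝔷).im < z.im) :
    Hml m 0 𝔷 z = 2 * (π : ℂ) * Complex.I *
      ∑' n : ℕ, (∑' p : CoprimePair,
        (((p.1.1 : ℂ) * 𝔷 + (p.1.2 : ℂ)) ^ m)⁻¹ *
          ((Real.exp (2 * π * n * 𝔷.im / Complex.normSq ((p.1.1 : ℂ) * 𝔷 + (p.1.2 : ℂ))) : ℝ) : ℂ) *
          eR (-(n * ((((completion p.1.1 p.1.2).1 * p.1.1 : ℤ) : ℝ) * Complex.normSq 𝔷 +
              (((completion p.1.1 p.1.2).2 * p.1.2 : ℤ) : ℝ) +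
              𝔷.re * (((completion p.1.1 p.1.2).1 * p.1.2 +
                (completion p.1.1 p.1.2).2 * p.1.1 : ℤ) : ℝ)) /
            Complex.normSq ((p.1.1 : ℂ) * 𝔷 + (p.1.2 : ℂ))))) * qexp z ^ n :=
  H_Fourier_coprime_general m hm 𝔷 h𝔷 z hy

end

end RamanujanMero
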